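/- Let g be an aligned history-dependent game with reference static game ĝ, let P be a local and monotone asynchronous learning rule, let π be a probability distribution on A, and let T ≥ 1. Then the probability that the history-dependent process is at the all-ones profile at time T is at least that of the static process: Pr(s(T;P_π) = 1⃗) ≥ Pr(s(T;P̂_π) = 1⃗). -/

import Mathlib

open scoped Classical
open Finset

abbrev Profile (n : ℕ) := Fin n → Bool
abbrev UtilProfile (n : ℕ) := Fin n → Profile n → ℝ
abbrev Rule (n : ℕ) := Profile n → Profile n → UtilProfile n → ℝ

/-- `P` is an individual learning rule for agent `i`: it maps into `[0,1]`, is a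
probability measure over next profiles, and only agent `i` may change its action. -/
def IsIndividual {n : ℕ} (i : Fin n) (P : Rule n) : Prop :=
  (∀ (a : Profile n) (U : UtilProfile n), ∑ b : Profile n, P a b U = 1) ∧
  (∀ (a b : Profile n) (U : UtilProfile n), 0 ≤ P a b U ∧ P a b U ≤ 1) ∧
  (∀ (a b : Profile n) (U : UtilProfile n), (∃ j, j ≠ i ∧ a j ≠ b j) → P a b U = 0)

/-- `P` is local: the transition probability only depends on the selected action of `i`
and the pair of payoffs `(U_i(0,a_{-i}), U_i(1,a_{-i}))`. -/
def IsLocalRule {n : ℕ} (i : Fin n) (P : Rule n) : Prop :=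
  ∃ Pbar : Bool → ℝ × ℝ → ℝ,
    ∀ (a : Profile n) (b : Bool) (U : UtilProfile n),
      P a (Function.update a i b) U
        = Pbar b (U i (Function.update a i false), U i (Function.update a i true))

/-- The utility profile obtained from `U` by adding `l` to agent `i`'s utility on
profiles where `i` plays `b`. -/
def bump {n : ℕ} (i : Fin n) (U : UtilProfile n) (b : Bool) (l : ℝ) : UtilProfile n :=
  Function.update U i (fun x => if x i = b then U i x + l else U i x)

/-- `P` is monotone with respect to utility. -/
def IsMonotoneRule {n : ℕ} (i : Fin n) (P : Rule n) : Prop :=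
  ∀ (U : UtilProfile n) (b : Bool) (l : ℝ), 0 ≤ l → ∀ a : Profile n,
    P a (Function.update a i b) U ≤ P a (Function.update a i b) (bump i U b l)

/-- The asynchronous learning rule built from individual learning rules. -/
noncomputable def asyncRule {n : ℕ} (Pvec : Fin n → Rule n) : Rule n :=
  fun a b U => (1 / (n : ℝ)) * ∑ i : Fin n, Pvec i a b U

/-- A finite (nonempty) history of action profiles; `⟨T, α⟩` has length `T+1`. -/
abbrev Hist (n : ℕ) := Σ T : ℕ, (Fin (T + 1) → Profile n)

/-- The last action profile of a history. -/
def lastProf {n : ℕ} (h : Hist n) : Profile n := h.2 (Fin.last h.1)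

/-- `Uh` is an aligned history-dependent game with reference static game `Uhat`. -/
def Aligned {n : ℕ} (Uh : Hist n → UtilProfile n) (Uhat : UtilProfile n) : Prop :=
  ∀ (h : Hist n) (a : Profile n) (i : Fin n),
    (∀ j, j ≠ i → a j ≤ lastProf h j) →
    Uhat i (Function.update a i true) ≤ Uh h i (Function.update (lastProf h) i true) ∧
    Uh h i (Function.update (lastProf h) i false) ≤ Uhat i (Function.update a i false)

/-- The prefix `α^{≤t}` of a path `α` (a history of length `t+1`). -/
def prefixHist {n T : ℕ} (α : Fin (T + 1) → Profile n) (t : Fin T) : Hist n :=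
  ⟨t.1, fun s => α (Fin.castLE (Nat.succ_le_succ t.isLt.le) s)⟩

/-- The path measure of the history-dependent game:
`P_π(α) = π(α¹) ∏_t P^{α^{≤t}}(α^{t+1})`. -/
noncomputable def pathHist {n : ℕ} (P : Rule n) (Uh : Hist n → UtilProfile n)
    (π : Profile n → ℝ) (T : ℕ) (α : Fin (T + 1) → Profile n) : ℝ :=
  π (α 0) * ∏ t : Fin T, P (α t.castSucc) (α t.succ) (Uh (prefixHist α t))

/-- The path measure of the static game:
`P̂_π(α) = π(α¹) ∏_t P̂^{α^t}(α^{t+1})`. -/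
noncomputable def pathStatic {n : ℕ} (P : Rule n) (Uhat : UtilProfile n)
    (π : Profile n → ℝ) (T : ℕ) (α : Fin (T + 1) → Profile n) : ℝ :=
  π (α 0) * ∏ t : Fin T, P (α t.castSucc) (α t.succ) Uhat

/-- `π` is a probability distribution on the set of action profiles. -/
def IsProb {n : ℕ} (π : Profile n → ℝ) : Prop :=
  (∀ a, 0 ≤ π a) ∧ ∑ a : Profile n, π a = 1

/-- The probability that the process governed by the path measure `μ` is at profile `a`
at the final time of paths of length `T+1`. -/
noncomputable def prAt {n : ℕ} (T : ℕ) (μ : (Fin (T + 1) → Profile n) → ℝ)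
    (a : Profile n) : ℝ :=
  ∑ α ∈ Finset.univ.filter (fun α : Fin (T + 1) → Profile n => α (Fin.last T) = a), μ α


/-!
Backward induction on the number of remaining steps: the probability of reaching `1⃗` from a
static state `x` is at most that from a history `h` with `x ≤ last h`. In one asynchronous step
the chosen agent `i` switches to `true` from `h` at least as likely as from `x`, since alignment
makes the history-dependent game pay more for `true` and less for `false`, and a local monotone
rule only sees these two payoffs. Coupling the two moves so that `x` goes to `true` only when `h`
does, each of the three possible pairs of successors is again ordered.
-/

theorem mix_le_mix {p q a b c d : ℝ} (hp : 0 ≤ p) (hpq : p ≤ q) (hq : q ≤ 1)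
    (hac : a ≤ c) (had : a ≤ d) (hbd : b ≤ d) :
    (1 - p) * a + p * b ≤ (1 - q) * c + q * d := by
  nlinarith [mul_nonneg (sub_nonneg.2 hq) (sub_nonneg.2 hac),
    mul_nonneg (sub_nonneg.2 hpq) (sub_nonneg.2 had), mul_nonneg hp (sub_nonneg.2 hbd)]

section
variable {n : ℕ} {i : Fin n} {P : Rule n}

theorem update_false_ne_update_true (a : Profile n) (i : Fin n) :
    Function.update a i false ≠ Function.update a i true := fun h => by
  simpa using congrFun h i

namespace IsIndividual

theorem apply_eq_zero (hP : IsIndividual i P) {a b : Profile n} (U : UtilProfile n)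
    (hb : ∀ c, b ≠ Function.update a i c) : P a b U = 0 := by
  refine hP.2.2 a b U (by_contra fun h => hb (b i) ?_)
  simp only [not_exists, not_and, not_not] at h
  exact Function.eq_update_iff.2 ⟨rfl, fun j hj => (h j hj).symm⟩

theorem sum_mul_eq (hP : IsIndividual i P) (a : Profile n) (U : UtilProfile n)
    (g : Profile n → ℝ) :
    ∑ b, P a b U * g b
      = P a (Function.update a i false) U * g (Function.update a i false)
        + P a (Function.update a i true) U * g (Function.update a i true) := by
  rw [← Finset.sum_pair (f := fun b => P a b U * g b) (update_false_ne_update_true a i)]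
  refine (Finset.sum_subset (Finset.subset_univ _) fun b _ hb => ?_).symm
  rw [hP.apply_eq_zero U fun c hc => hb (by cases c <;> simp [hc]), zero_mul]

theorem apply_update_false (hP : IsIndividual i P) (a : Profile n) (U : UtilProfile n) :
    P a (Function.update a i false) U = 1 - P a (Function.update a i true) U := by
  have h := hP.sum_mul_eq a U fun _ => 1
  simp only [mul_one, hP.1] at h
  linarith

end IsIndividual

theorem IsLocalRule.apply_update_congr (hP : IsLocalRule i P) {a a' : Profile n}
    {U U' : UtilProfile n}
    (h0 : U i (Function.update a i false) = U' i (Function.update a' i false))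
    (h1 : U i (Function.update a i true) = U' i (Function.update a' i true)) (b : Bool) :
    P a (Function.update a i b) U = P a' (Function.update a' i b) U' := by
  obtain ⟨Pbar, hPbar⟩ := hP
  rw [hPbar, hPbar, h0, h1]

theorem bump_apply_update_self (i : Fin n) (U : UtilProfile n) (b : Bool) (l : ℝ)
    (a : Profile n) :
    bump i U b l i (Function.update a i b) = U i (Function.update a i b) + l := by
  simp [bump]

theorem bump_apply_update_of_ne (i : Fin n) (U : UtilProfile n) {b c : Bool} (hcb : c ≠ b)
    (l : ℝ) (a : Profile n) :
    bump i U b l i (Function.update a i c) = U i (Function.update a i c) := by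
  simp [bump, hcb]

theorem apply_update_true_le (hI : IsIndividual i P) (hL : IsLocalRule i P)
    (hM : IsMonotoneRule i P) {x y : Profile n} {U V : UtilProfile n}
    (h0 : V i (Function.update y i false) ≤ U i (Function.update x i false))
    (h1 : U i (Function.update x i true) ≤ V i (Function.update y i true)) :
    P x (Function.update x i true) U ≤ P y (Function.update y i true) V := by
  -- Raise the payoff of `true` at `x` and that of `false` at `y` until both see the same pair.
  set U' := bump i U true (V i (Function.update y i true) - U i (Function.update x i true))
  set V' := bump i V false (U i (Function.update x i false) - V i (Function.update y i false))
  have hsame : P x (Function.update x i false) U' = P y (Function.update y i false) V' :=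
    hL.apply_update_congr
      (by simp only [U', V', bump_apply_update_self,
        bump_apply_update_of_ne _ _ Bool.false_ne_true]; ring)
      (by simp only [U', V', bump_apply_update_self,
        bump_apply_update_of_ne _ _ Bool.false_ne_true.symm]; ring)
      false
  calc P x (Function.update x i true) U
      ≤ P x (Function.update x i true) U' := hM U true _ (sub_nonneg.2 h1) x
    _ = 1 - P y (Function.update y i false) V' := by rw [← hsame, hI.apply_update_false]; ring
    _ ≤ 1 - P y (Function.update y i false) V :=
      sub_le_sub_left (hM V false _ (sub_nonneg.2 h0) y) 1
    _ = P y (Function.update y i true) V := by rw [hI.apply_update_false]; ring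

end

section
variable {n : ℕ}

def extendHist (h : Hist n) (y : Profile n) : Hist n := ⟨h.1 + 1, Fin.snoc h.2 y⟩

@[simp]
theorem lastProf_extendHist (h : Hist n) (y : Profile n) : lastProf (extendHist h y) = y := by
  simp [lastProf, extendHist]

theorem prefixHist_snoc_castSucc {T : ℕ} (β : Fin (T + 1) → Profile n) (y : Profile n)
    (t : Fin T) :
    prefixHist (Fin.snoc β y : Fin (T + 2) → Profile n) t.castSucc = prefixHist β t := by
  simp only [prefixHist]
  congr 1
  funext s
  exact Fin.snoc_castSucc (α := fun _ => Profile n) y β (Fin.castLE _ s)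

theorem prefixHist_snoc_last {T : ℕ} (β : Fin (T + 1) → Profile n) (y : Profile n) :
    prefixHist (Fin.snoc β y : Fin (T + 2) → Profile n) (Fin.last T) = ⟨T, β⟩ := by
  simp only [prefixHist]
  congr 1
  funext s
  exact Fin.snoc_castSucc (α := fun _ => Profile n) y β s

theorem pathHist_snoc (P : Rule n) (Uh : Hist n → UtilProfile n) (π : Profile n → ℝ)
    {T : ℕ} (β : Fin (T + 1) → Profile n) (y : Profile n) :
    pathHist P Uh π (T + 1) (Fin.snoc β y)
      = pathHist P Uh π T β * P (β (Fin.last T)) y (Uh ⟨T, β⟩) := by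
  simp only [pathHist, Fin.prod_univ_castSucc, Fin.succ_castSucc, Fin.snoc_castSucc,
    Fin.succ_last, Fin.snoc_last, prefixHist_snoc_castSucc, prefixHist_snoc_last]
  rw [← Fin.castSucc_zero, Fin.snoc_castSucc, mul_assoc]

noncomputable def pathExpect (P : Rule n) (Uh : Hist n → UtilProfile n) (π : Profile n → ℝ)
    (T : ℕ) (w : Hist n → ℝ) : ℝ :=
  ∑ α : Fin (T + 1) → Profile n, pathHist P Uh π T α * w ⟨T, α⟩

theorem pathExpect_zero (P : Rule n) (Uh : Hist n → UtilProfile n) (π : Profile n → ℝ)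
    (w : Hist n → ℝ) : pathExpect P Uh π 0 w = ∑ x, π x * w ⟨0, fun _ => x⟩ := by
  rw [pathExpect, ← (Equiv.funUnique (Fin 1) (Profile n)).symm.sum_comp]
  simp only [pathHist, Equiv.funUnique_symm_apply, uniqueElim_const, Finset.univ_eq_empty,
    Finset.prod_empty, mul_one]
  rfl

theorem pathExpect_succ (P : Rule n) (Uh : Hist n → UtilProfile n) (π : Profile n → ℝ)
    (T : ℕ) (w : Hist n → ℝ) :
    pathExpect P Uh π (T + 1) w
      = pathExpect P Uh π T fun h => ∑ y, P (lastProf h) y (Uh h) * w (extendHist h y) := by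
  rw [pathExpect, ← (Fin.snocEquiv fun _ => Profile n).sum_comp, Fintype.sum_prod_type_right]
  refine Finset.sum_congr rfl fun β _ => ?_
  rw [Finset.mul_sum]
  refine Finset.sum_congr rfl fun y _ => ?_
  change pathHist P Uh π (T + 1) (Fin.snoc β y) * w ⟨T + 1, Fin.snoc β y⟩ = _
  rw [pathHist_snoc, mul_assoc]
  rfl

noncomputable def reachProb (P : Rule n) (Uh : Hist n → UtilProfile n) (a : Profile n) :
    ℕ → Hist n → ℝ
  | 0, h => if lastProf h = a then 1 else 0
  | T + 1, h => ∑ y, P (lastProf h) y (Uh h) * reachProb P Uh a T (extendHist h y)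

theorem pathExpect_reachProb (P : Rule n) (Uh : Hist n → UtilProfile n) (π : Profile n → ℝ)
    (a : Profile n) (T k : ℕ) :
    pathExpect P Uh π T (reachProb P Uh a k)
      = ∑ x, π x * reachProb P Uh a (k + T) ⟨0, fun _ => x⟩ := by
  induction T generalizing k with
  | zero => exact pathExpect_zero P Uh π _
  | succ T ih => rw [pathExpect_succ, ← add_assoc, add_right_comm]; exact ih (k + 1)

theorem prAt_pathHist (P : Rule n) (Uh : Hist n → UtilProfile n) (π : Profile n → ℝ)
    (T : ℕ) (a : Profile n) :
    prAt T (pathHist P Uh π T) a = ∑ x, π x * reachProb P Uh a T ⟨0, fun _ => x⟩ := by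
  rw [← zero_add T, ← pathExpect_reachProb, prAt, Finset.sum_filter, zero_add]
  refine Finset.sum_congr rfl fun α _ => ?_
  split_ifs with hα <;> simp [reachProb, lastProf, hα]

theorem sum_asyncRule_mul (Pvec : Fin n → Rule n) (x : Profile n) (U : UtilProfile n)
    (g : Profile n → ℝ) :
    ∑ y, asyncRule Pvec x y U * g y = 1 / (n : ℝ) * ∑ i, ∑ y, Pvec i x y U * g y := by
  simp only [asyncRule, mul_assoc, Finset.sum_mul, ← Finset.mul_sum]
  rw [Finset.sum_comm]

theorem reachProb_le_reachProb {Pvec : Fin n → Rule n}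
    (hP : ∀ i, IsIndividual i (Pvec i) ∧ IsLocalRule i (Pvec i) ∧ IsMonotoneRule i (Pvec i))
    {Uh : Hist n → UtilProfile n} {Uhat : UtilProfile n} (hA : Aligned Uh Uhat) (T : ℕ)
    {h' h : Hist n} (hle : lastProf h' ≤ lastProf h) :
    reachProb (asyncRule Pvec) (fun _ => Uhat) ⊤ T h'
      ≤ reachProb (asyncRule Pvec) Uh ⊤ T h := by
  induction T generalizing h' h with
  | zero =>
    simp only [reachProb]
    split_ifs with h'top htop
    · exact le_rfl
    · exact absurd (top_le_iff.1 (h'top ▸ hle)) htop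
    · exact zero_le_one
    · exact le_rfl
  | succ T ih =>
    simp only [reachProb]
    rw [sum_asyncRule_mul, sum_asyncRule_mul]
    refine mul_le_mul_of_nonneg_left (Finset.sum_le_sum fun i _ => ?_) (by positivity)
    obtain ⟨hI, hL, hM⟩ := hP i
    rw [hI.sum_mul_eq, hI.sum_mul_eq, hI.apply_update_false, hI.apply_update_false]
    have hext : ∀ b b' : Bool, b ≤ b' →
        lastProf (extendHist h' (Function.update (lastProf h') i b))
          ≤ lastProf (extendHist h (Function.update (lastProf h) i b')) := fun b b' hb => by
      simpa [update_le_update_iff, hb] using fun j _ => hle j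
    have hal := hA h (lastProf h') i fun j _ => hle j
    exact mix_le_mix (hI.2.1 _ _ _).1 (apply_update_true_le hI hL hM hal.2 hal.1)
      (hI.2.1 _ _ _).2 (ih (hext _ _ le_rfl)) (ih (hext _ _ bot_le)) (ih (hext _ _ le_rfl))

end

theorem prob_all_ones_dominance_general (n : ℕ) (Pvec : Fin n → Rule n)
    (hP : ∀ i, IsIndividual i (Pvec i) ∧ IsLocalRule i (Pvec i) ∧ IsMonotoneRule i (Pvec i))
    (Uh : Hist n → UtilProfile n) (Uhat : UtilProfile n) (hA : Aligned Uh Uhat)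
    (π : Profile n → ℝ) (hπ : IsProb π) (T : ℕ) :
    prAt T (pathStatic (asyncRule Pvec) Uhat π T) (fun _ => true)
      ≤ prAt T (pathHist (asyncRule Pvec) Uh π T) (fun _ => true) := by
  -- The static process is the history-dependent one with constant utilities.
  change prAt T (pathHist (asyncRule Pvec) (fun _ => Uhat) π T) ⊤ ≤ _
  rw [prAt_pathHist, prAt_pathHist]
  gcongr with x
  · exact hπ.1 x
  · exact reachProb_le_reachProb hP hA T le_rfl

/-- For an aligned history-dependent game with a local and monotone asynchronous
learning rule, the probability of being at the all-ones profile at time `T` is at least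
as large in the history-dependent game as in the static one. -/
theorem prob_all_ones_dominance (n : ℕ) (hn : 1 ≤ n) (Pvec : Fin n → Rule n)
    (hP : ∀ i, IsIndividual i (Pvec i) ∧ IsLocalRule i (Pvec i) ∧ IsMonotoneRule i (Pvec i))
    (Uh : Hist n → UtilProfile n) (Uhat : UtilProfile n) (hA : Aligned Uh Uhat)
    (π : Profile n → ℝ) (hπ : IsProb π) (T : ℕ) :
    prAt T (pathStatic (asyncRule Pvec) Uhat π T) (fun _ => true)
      ≤ prAt T (pathHist (asyncRule Pvec) Uh π T) (fun _ => true) :=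
  prob_all_ones_dominance_general n Pvec hP Uh Uhat hA π hπ T
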